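/- Let f be a matrix Schur function with f(0) = α₀ and Schur transform f₁ with f₁(0) = α₁, and set ρ₀^R := (1-α₀α₀†)^{1/2}. Then det(1 - f(z)·α₀†) = det((ρ₀^R)²)·(1 - z·tr(α₁·α₀†) + O(z²)) as z → 0. -/

import Mathlib

open Matrix Asymptotics
open scoped ComplexOrder

attribute [local instance] Matrix.normedAddCommGroup Matrix.normedSpace

/-- The positive semidefinite square root of a positive semidefinite matrix
(the definition `Matrix.PosSemidef.sqrt` of the older Mathlib, since removed). -/
noncomputable def Matrix.PosSemidef.sqrt {n 𝕜 : Type*} [Fintype n] [RCLike 𝕜] [DecidableEq n]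
    {A : Matrix n n 𝕜} (hA : A.PosSemidef) : Matrix n n 𝕜 :=
  hA.1.eigenvectorUnitary.1 * diagonal ((↑) ∘ (√·) ∘ hA.1.eigenvalues) *
  (star hA.1.eigenvectorUnitary : Matrix n n 𝕜)

open Filter Topology Polynomial

/-! With `α = f 0`, `β = f'(0)` and `A = 1 - α α†`, the identity `α† (1 - α α†) = (1 - α† α) α†`
passes to the square roots, `α† ρ₀^R = ρ₀^L α†`, because for matrices the square root is a
polynomial in its argument (Lagrange interpolation on the spectra). Letting `z → 0` in the
definition of `f₁` gives `α₁ = (ρ₀^R)⁻¹ β (ρ₀^L)⁻¹`, hence `tr (α₁ α†) = tr (A⁻¹ β α†)`. By Jacobi's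
formula the derivative of `z ↦ det (1 - f z α†)` at `0` is `-det A · tr (A⁻¹ β α†)`, and the claim
is the first-order Taylor expansion of this analytic function. -/

theorem SemiconjBy.aeval {R A : Type*} [CommSemiring R] [Semiring A] [Algebra R A] {x a b : A}
    (h : SemiconjBy x a b) (q : R[X]) :
    SemiconjBy x (Polynomial.aeval a q) (Polynomial.aeval b q) := by
  induction q using Polynomial.induction_on' with
  | add q r hq hr => simpa only [map_add] using hq.add_right hr
  | monomial k r =>
    simpa only [aeval_monomial] using
      SemiconjBy.mul_right (Algebra.commute_algebraMap_right r x) (h.pow_right k)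

theorem SemiconjBy.cfc_of_finite_spectrum {A : Type*} {p : A → Prop} [TopologicalSpace A]
    [Ring A] [StarRing A] [Algebra ℝ A] [ContinuousFunctionalCalculus ℝ A p] {x a b : A}
    (h : SemiconjBy x a b) (ha : p a) (hb : p b) (hfa : (spectrum ℝ a).Finite)
    (hfb : (spectrum ℝ b).Finite) (g : ℝ → ℝ) : SemiconjBy x (cfc g a) (cfc g b) := by
  let s := hfa.toFinset ∪ hfb.toFinset
  let q := Lagrange.interpolate s id g
  have hq : ∀ {c : A}, p c → spectrum ℝ c ⊆ s → cfc g c = Polynomial.aeval c q := fun hc hsub => by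
    rw [← cfc_polynomial q _ hc]
    exact cfc_congr fun t ht =>
      (Lagrange.eval_interpolate_at_node g (Set.injOn_id _) (Finset.mem_coe.mp (hsub ht))).symm
  rw [hq ha fun t ht => by simp [s, ht], hq hb fun t ht => by simp [s, ht]]
  exact h.aeval q

namespace Matrix

namespace PosSemidef

variable {n 𝕜 : Type*} [Fintype n] [RCLike 𝕜] [DecidableEq n] {A : Matrix n n 𝕜}

theorem sqrt_eq_cfc (hA : A.PosSemidef) : hA.sqrt = cfc Real.sqrt A := by
  rw [hA.1.cfc_eq]
  rfl

open scoped MatrixOrder in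
theorem sqrt_sq (hA : A.PosSemidef) : hA.sqrt ^ 2 = A := by
  rw [hA.sqrt_eq_cfc, ← cfcₙ_eq_cfc, ← CFC.sqrt_eq_real_sqrt A hA.nonneg, CFC.sq_sqrt A hA.nonneg]

theorem isUnit_det_sqrt (hA : A.PosSemidef) (h : IsUnit A.det) : IsUnit hA.sqrt.det := by
  rw [← hA.sqrt_sq, det_pow] at h
  exact (isUnit_pow_iff two_ne_zero).mp h

theorem inv_mul_sqrt (hA : A.PosSemidef) (h : IsUnit A.det) : A⁻¹ * hA.sqrt = hA.sqrt⁻¹ := by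
  have hA' : A⁻¹ = (hA.sqrt * hA.sqrt)⁻¹ := by rw [← sq, hA.sqrt_sq]
  rw [hA', mul_inv_rev, Matrix.mul_assoc, nonsing_inv_mul _ (hA.isUnit_det_sqrt h),
    Matrix.mul_one]

theorem semiconjBy_sqrt {B X : Matrix n n 𝕜} (hA : A.PosSemidef) (hB : B.PosSemidef)
    (h : SemiconjBy X A B) : SemiconjBy X hA.sqrt hB.sqrt := by
  rw [hA.sqrt_eq_cfc, hB.sqrt_eq_cfc]
  exact h.cfc_of_finite_spectrum hA.1.isSelfAdjoint hB.1.isSelfAdjoint A.finite_real_spectrum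
    B.finite_real_spectrum _

end PosSemidef

theorem semiconjBy_conjTranspose_sqrt_one_sub {n 𝕜 : Type*} [Fintype n] [RCLike 𝕜]
    [DecidableEq n] {a : Matrix n n 𝕜} (hR : (1 - a * aᴴ).PosSemidef)
    (hL : (1 - aᴴ * a).PosSemidef) : SemiconjBy aᴴ hR.sqrt hL.sqrt :=
  hR.semiconjBy_sqrt hL (by simp only [SemiconjBy]; noncomm_ring)

theorem trace_inv_mul_mul_inv_mul_of_semiconjBy {n R : Type*} [Fintype n] [DecidableEq n]
    [CommRing R] {ρ σ a : Matrix n n R} (hρ : IsUnit ρ.det) (hσ : IsUnit σ.det)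
    (h : SemiconjBy a ρ σ) (b : Matrix n n R) :
    trace (ρ⁻¹ * b * σ⁻¹ * a) = trace ((ρ ^ 2)⁻¹ * (b * a)) := by
  have hinv : σ⁻¹ * a = a * ρ⁻¹ := by
    simpa only [SemiconjBy, zpow_neg_one] using (SemiconjBy.zpow_right hρ hσ h (-1)).symm
  rw [Matrix.mul_assoc, hinv, ← Matrix.mul_assoc, trace_mul_comm, sq, mul_inv_rev]
  simp only [Matrix.mul_assoc]

theorem trace_adjugate_mul {n R : Type*} [Fintype n] [DecidableEq n] [CommRing R]
    (A H : Matrix n n R) : trace (adjugate A * H) = ∑ i, (A.updateRow i (H i)).det := by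
  rw [trace_mul_comm]
  refine Finset.sum_congr rfl fun i _ => ?_
  rw [← cramer_transpose_apply, cramer_eq_adjugate_mulVec, ← adjugate_transpose]
  simp [mulVec, mul_apply, dotProduct, mul_comm]

section Calculus

variable {𝕜 n : Type*} [NontriviallyNormedField 𝕜] [Fintype n] [DecidableEq n]

def detRowContinuousMultilinear : ContinuousMultilinearMap 𝕜 (fun _ : n => n → 𝕜) 𝕜 :=
  { (detRowAlternating : (n → 𝕜) [⋀^n]→ₗ[𝕜] 𝕜).toMultilinearMap with
    cont := continuous_id.matrix_det }

theorem _root_.HasDerivAt.matrix_det {M : 𝕜 → Matrix n n 𝕜} {M' : Matrix n n 𝕜} {z : 𝕜}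
    (h : HasDerivAt M M' z) :
    HasDerivAt (fun w => (M w).det) (trace (adjugate (M z) * M')) z := by
  have := ((detRowContinuousMultilinear (𝕜 := 𝕜) (n := n)).hasFDerivAt (M z)).comp_hasDerivAt z h
  rw [trace_adjugate_mul]
  exact this.congr_deriv (ContinuousMultilinearMap.linearDeriv_apply _ _ _)

theorem _root_.HasDerivAt.matrix_det_of_isUnit {M : 𝕜 → Matrix n n 𝕜} {M' : Matrix n n 𝕜}
    {z : 𝕜} (h : HasDerivAt M M' z) (hM : IsUnit (M z).det) :
    HasDerivAt (fun w => (M w).det) ((M z).det * trace ((M z)⁻¹ * M')) z := by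
  have hadj : adjugate (M z) = (M z).det • (M z)⁻¹ := by
    rw [inv_def, smul_smul, Ring.mul_inverse_cancel _ hM, one_smul]
  simpa only [hadj, smul_mul, trace_smul, smul_eq_mul] using h.matrix_det

theorem _root_.AnalyticAt.matrix_det [CompleteSpace 𝕜] {M : 𝕜 → Matrix n n 𝕜} {z : 𝕜}
    (h : AnalyticAt 𝕜 M z) : AnalyticAt 𝕜 (fun w => (M w).det) z :=
  (detRowContinuousMultilinear (𝕜 := 𝕜) (n := n)).analyticAt.comp h

theorem _root_.HasDerivAt.matrix_mul_const [CompleteSpace 𝕜] {M : 𝕜 → Matrix n n 𝕜}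
    {M' : Matrix n n 𝕜} {z : 𝕜} (h : HasDerivAt M M' z) (a : Matrix n n 𝕜) :
    HasDerivAt (fun w => M w * a) (M' * a) z :=
  (LinearMap.mulRight 𝕜 a).toContinuousLinearMap.hasFDerivAt.comp_hasDerivAt z h

theorem _root_.AnalyticAt.matrix_mul_const [CompleteSpace 𝕜] {M : 𝕜 → Matrix n n 𝕜} {z : 𝕜}
    (h : AnalyticAt 𝕜 M z) (a : Matrix n n 𝕜) : AnalyticAt 𝕜 (fun w => M w * a) z :=
  ((LinearMap.mulRight 𝕜 a).toContinuousLinearMap.analyticAt _).comp h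

end Calculus

theorem eq_mul_deriv_mul_of_eventuallyEq_inv_smul {𝕜 n : Type*} [NontriviallyNormedField 𝕜]
    [Fintype n] {f g W : 𝕜 → Matrix n n 𝕜} {P Q : Matrix n n 𝕜} (hf : DifferentiableAt 𝕜 f 0)
    (hW : ContinuousAt W 0) (hg : ContinuousAt g 0)
    (h : ∀ᶠ z in 𝓝[≠] 0, g z = z⁻¹ • (P * (f z - f 0) * W z * Q)) :
    g 0 = P * deriv f 0 * W 0 * Q := by
  have hslope : Tendsto (fun z => z⁻¹ • (f z - f 0)) (𝓝[≠] 0) (𝓝 (deriv f 0)) := by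
    refine (hasDerivAt_iff_tendsto_slope.mp hf.hasDerivAt).congr fun z => ?_
    rw [slope_def_module, sub_zero]
  have hlim : Tendsto (fun z => P * (z⁻¹ • (f z - f 0)) * W z * Q) (𝓝[≠] 0)
      (𝓝 (P * deriv f 0 * W 0 * Q)) :=
    ((tendsto_const_nhds.mul hslope).mul (hW.tendsto.mono_left nhdsWithin_le_nhds)).mul
      tendsto_const_nhds
  refine tendsto_nhds_unique (hg.tendsto.mono_left nhdsWithin_le_nhds) (hlim.congr' ?_)
  filter_upwards [h] with z hz
  rw [hz, Matrix.mul_smul, Matrix.smul_mul, Matrix.smul_mul]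

end Matrix

theorem AnalyticAt.isBigO_sub_sub_smul_deriv {𝕜 E : Type*} [NontriviallyNormedField 𝕜]
    [NormedAddCommGroup E] [NormedSpace 𝕜 E] {g : 𝕜 → E} {x : 𝕜} (h : AnalyticAt 𝕜 g x) :
    (fun y => g y - g x - (y - x) • deriv g x) =O[𝓝 x] fun y => (y - x) ^ 2 := by
  obtain ⟨p, hp⟩ := h
  have hsum : ∀ y, p.partialSum 2 y = g x + y • deriv g x := fun y => by
    have h0 : p.coeff 0 = g x := hp.coeff_zero _
    simp [FormalMultilinearSeries.partialSum, Finset.sum_range_succ, hp.deriv, h0]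
  have hshift : Tendsto (· - x) (𝓝 x) (𝓝 0) := tendsto_sub_nhds_zero_iff.mpr tendsto_id
  have := (hp.isBigO_sub_partialSum_pow 2).comp_tendsto hshift
  simp only [Function.comp_def, add_sub_cancel, hsum, sub_add_eq_sub_sub] at this
  simpa only [← norm_pow, isBigO_norm_right] using this

theorem schurTransform_zero {n 𝕜 : Type*} [Fintype n] [DecidableEq n] [RCLike 𝕜]
    {f f₁ : 𝕜 → Matrix n n 𝕜} (hf : DifferentiableAt 𝕜 f 0)
    (hL₀ : IsUnit (1 - (f 0)ᴴ * f 0).det) (hR : (1 - f 0 * (f 0)ᴴ).PosSemidef)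
    (hL : (1 - (f 0)ᴴ * f 0).PosSemidef) (hf₁ : ContinuousAt f₁ 0)
    (hdef : ∀ᶠ z in 𝓝[≠] 0,
      f₁ z = z⁻¹ • (hR.sqrt⁻¹ * (f z - f 0) * (1 - (f 0)ᴴ * f z)⁻¹ * hL.sqrt)) :
    f₁ 0 = hR.sqrt⁻¹ * deriv f 0 * hL.sqrt⁻¹ := by
  have hW : ContinuousAt (fun z => (1 - (f 0)ᴴ * f z)⁻¹) 0 := by
    refine (continuousAt_matrix_inv _ ?_).comp
      (continuousAt_const.sub (continuousAt_const.mul hf.continuousAt))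
    rw [Ring.inverse_eq_inv']
    exact continuousAt_inv₀ hL₀.ne_zero
  rw [eq_mul_deriv_mul_of_eventuallyEq_inv_smul hf hW hf₁ hdef, Matrix.mul_assoc _ _ hL.sqrt,
    hL.inv_mul_sqrt hL₀]

/-- For a matrix Schur function `f` with Schur transform `f₁`, `α₀ = f(0)`, `α₁ = f₁(0)`:
`det(1 - f(z)α₀†) = det((ρ₀^R)²) (1 - z tr(α₁α₀†) + O(z²))` as `z → 0`. -/
theorem det_one_sub_schur_expansion (p : ℕ)
    (f f₁ : ℂ → Matrix (Fin p) (Fin p) ℂ)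
    (hf : AnalyticOnNhd ℂ f (Metric.ball 0 1))
    (hcontr : ∀ z ∈ Metric.ball (0:ℂ) 1,
      ((1 : Matrix (Fin p) (Fin p) ℂ) - (f z)ᴴ * f z).PosDef)
    (hR : ((1 : Matrix (Fin p) (Fin p) ℂ) - f 0 * (f 0)ᴴ).PosSemidef)
    (hL : ((1 : Matrix (Fin p) (Fin p) ℂ) - (f 0)ᴴ * f 0).PosSemidef)
    (hf₁ : AnalyticOnNhd ℂ f₁ (Metric.ball 0 1))
    (hdef : ∀ z ∈ Metric.ball (0:ℂ) 1, z ≠ 0 →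
      f₁ z = z⁻¹ • (hR.sqrt⁻¹ * (f z - f 0) * (1 - (f 0)ᴴ * f z)⁻¹ * hL.sqrt)) :
    (fun z : ℂ => ((1 : Matrix (Fin p) (Fin p) ℂ) - f z * (f 0)ᴴ).det
        - (hR.sqrt ^ 2).det * (1 - z * (f₁ 0 * (f 0)ᴴ).trace))
      =O[nhds 0] fun z : ℂ => z ^ 2 := by
  have h0 : (0 : ℂ) ∈ Metric.ball (0 : ℂ) 1 := Metric.mem_ball_self one_pos
  have hfa := hf 0 h0
  have hL₀ : IsUnit (1 - (f 0)ᴴ * f 0).det := (isUnit_iff_isUnit_det _).mp (hcontr 0 h0).isUnit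
  have hR₀ : IsUnit (1 - f 0 * (f 0)ᴴ).det := by rwa [det_one_sub_mul_comm]
  have hf₁0 : f₁ 0 = hR.sqrt⁻¹ * deriv f 0 * hL.sqrt⁻¹ :=
    schurTransform_zero hfa.differentiableAt hL₀ hR hL (hf₁ 0 h0).continuousAt
      (by filter_upwards [self_mem_nhdsWithin,
            mem_nhdsWithin_of_mem_nhds (Metric.ball_mem_nhds 0 one_pos)] with z hz0 hz
          using hdef z hz hz0)
  have htrace : ((1 - f 0 * (f 0)ᴴ)⁻¹ * (deriv f 0 * (f 0)ᴴ)).trace = (f₁ 0 * (f 0)ᴴ).trace := by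
    rw [hf₁0, Matrix.trace_inv_mul_mul_inv_mul_of_semiconjBy (hR.isUnit_det_sqrt hR₀)
      (hL.isUnit_det_sqrt hL₀) (semiconjBy_conjTranspose_sqrt_one_sub hR hL), hR.sqrt_sq]
  have hderiv : HasDerivAt (fun z => (1 - f z * (f 0)ᴴ).det)
      (-((1 - f 0 * (f 0)ᴴ).det * (f₁ 0 * (f 0)ᴴ).trace)) 0 := by
    have hM : HasDerivAt (fun z => 1 - f z * (f 0)ᴴ) (-(deriv f 0 * (f 0)ᴴ)) 0 :=
      (hfa.differentiableAt.hasDerivAt.matrix_mul_const (f 0)ᴴ).const_sub 1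
    simpa only [Matrix.mul_neg, trace_neg, mul_neg, htrace] using hM.matrix_det_of_isUnit hR₀
  have hg : AnalyticAt ℂ (fun z => (1 - f z * (f 0)ᴴ).det) 0 :=
    (analyticAt_const.fun_sub (hfa.matrix_mul_const (f 0)ᴴ)).matrix_det
  have hTaylor := hg.isBigO_sub_sub_smul_deriv
  rw [hderiv.deriv] at hTaylor
  refine hTaylor.congr (fun z => ?_) fun z => by rw [sub_zero]
  rw [hR.sqrt_sq, sub_zero, smul_eq_mul]
  ring
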